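/- arXiv:2405.18102 — 3 statements merged into one kernel-verified Lean document; each statement's English description precedes it below -/
import Mathlib

section
/- For every election instance with exactly two parties there exists a seat assignment satisfying WLQ-X: for each party p, either rep(p,s) ≥ q(p), or for every seat t not assigned to p it holds that rep(p,s) + w_t > q(p). Moreover, the assignment that gives party 1 a maximal final segment of the (non-increasing) weight vector whose total weight does not exceed q(1), and gives all remaining seats to party 2, witnesses this. -/
open Finset

/-- Total weight of the seats assigned to party `p` under assignment `s`. -/
def rep {m k : ℕ} (w : Fin k → ℕ) (s : Fin k → Fin m) (p : Fin m) : ℕ :=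
  ∑ t, if s t = p then w t else 0

/-- The quota of party `p`: total weight times its vote share. -/
def quota {m k : ℕ} (n : ℕ) (v : Fin m → ℕ) (w : Fin k → ℕ) (p : Fin m) : ℚ :=
  (∑ t, (w t : ℚ)) * (v p : ℚ) / (n : ℚ)

/-- Total weight assigned to party `p` in rounds before round `t`. -/
def gw {m k : ℕ} (w : Fin k → ℕ) (s : Fin k → Fin m) (t : Fin k) (p : Fin m) : ℕ :=
  ∑ t' ∈ Finset.univ.filter (fun t' => t' < t), if s t' = p then w t' else 0

/-- WLQ-X: each party reaches its quota or any extra seat would take it past the quota. -/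
def WLQX {m k : ℕ} (n : ℕ) (v : Fin m → ℕ) (w : Fin k → ℕ) (s : Fin k → Fin m) : Prop :=
  ∀ p : Fin m, quota n v w p ≤ (rep w s p : ℚ) ∨
    ∀ t : Fin k, s t ≠ p → quota n v w p < (rep w s p : ℚ) + (w t : ℚ)

/-!
Let `c` be least such that the tail of the weight vector from `c` on weighs at most `q(1)`,
give that tail to party 1 and the rest to party 2. Any seat `t` party 1 lacks has `t < c`; by
minimality the tail from `c - 1` exceeds `q(1)`, and since the weights are non-increasing it
weighs `w (c - 1) + rep(1,s) ≤ w t + rep(1,s)`. Party 2 gets weight `ω - rep(1,s) ≥ ω - q(1)`,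
which is at least `q(2)` because `q(1) + q(2) ≤ ω` (with equality unless `n = 0`, where every
quota is `0`).
-/

section Quota

variable {m k : ℕ}

theorem sum_rep (w : Fin k → ℕ) (s : Fin k → Fin m) : ∑ p, rep w s p = ∑ t, w t := by
  simp only [rep]
  rw [Finset.sum_comm]
  simp

theorem sum_quota_le {n : ℕ} {v : Fin m → ℕ} (hn : ∑ p, v p = n) (w : Fin k → ℕ) :
    ∑ p, quota n v w p ≤ ∑ t, (w t : ℚ) := by
  have hω : 0 ≤ ∑ t, (w t : ℚ) := by positivity
  have hnQ : ∑ p, (v p : ℚ) = n := by exact_mod_cast hn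
  simp only [quota, ← Finset.sum_div, ← Finset.mul_sum]
  rw [hnQ, mul_div_assoc]
  rcases eq_or_ne (n : ℚ) 0 with h | h
  · simp [h, hω]
  · simp [div_self h]

theorem quota_nonneg (n : ℕ) (v : Fin m → ℕ) (w : Fin k → ℕ) (p : Fin m) :
    0 ≤ quota n v w p := by
  unfold quota; positivity

end Quota

section TailSum

variable {k : ℕ}

def tailSum (w : Fin k → ℕ) (c : ℕ) : ℕ :=
  ∑ i ∈ Finset.univ.filter (fun i : Fin k => c ≤ (i : ℕ)), w i

theorem tailSum_of_le (w : Fin k → ℕ) {c : ℕ} (hc : k ≤ c) : tailSum w c = 0 := by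
  refine Finset.sum_eq_zero fun i hi => ?_
  have := i.isLt
  simp only [Finset.mem_filter] at hi
  omega

theorem tailSum_eq_add (w : Fin k → ℕ) {c : ℕ} (hc : c < k) :
    tailSum w c = w ⟨c, hc⟩ + tailSum w (c + 1) := by
  have hsplit : Finset.univ.filter (fun i : Fin k => c ≤ (i : ℕ)) =
      insert ⟨c, hc⟩ (Finset.univ.filter (fun i : Fin k => c + 1 ≤ (i : ℕ))) := by
    ext i
    simp only [Finset.mem_filter, Finset.mem_univ, true_and, Finset.mem_insert, Fin.ext_iff]
    omega
  rw [tailSum, hsplit, Finset.sum_insert (by simp)]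
  rfl

theorem tailSum_le_add_tailSum_succ {w : Fin k → ℕ} (hw : Antitone w) {c : ℕ} {t : Fin k}
    (ht : (t : ℕ) ≤ c) : tailSum w c ≤ w t + tailSum w (c + 1) := by
  rcases lt_or_ge c k with hc | hc
  · rw [tailSum_eq_add w hc]
    exact Nat.add_le_add_right (hw (Fin.mk_le_mk.mpr ht)) _
  · rw [tailSum_of_le w hc]
    exact Nat.zero_le _

def tailAssignment (c : ℕ) (i : Fin k) : Fin 2 := if c ≤ (i : ℕ) then 0 else 1

theorem tailAssignment_eq_zero_iff {c : ℕ} {i : Fin k} :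
    tailAssignment c i = 0 ↔ c ≤ (i : ℕ) := by
  by_cases h : c ≤ (i : ℕ) <;> simp [tailAssignment, h]

theorem rep_tailAssignment_zero (w : Fin k → ℕ) (c : ℕ) :
    rep w (tailAssignment c) 0 = tailSum w c := by
  rw [rep, tailSum, Finset.sum_filter]
  refine Finset.sum_congr rfl fun i _ => ?_
  by_cases h : c ≤ (i : ℕ) <;> simp [tailAssignment, h]

end TailSum

theorem wlqx_of_two {n k : ℕ} {v : Fin 2 → ℕ} (hn : ∑ p, v p = n) {w : Fin k → ℕ}
    {s : Fin k → Fin 2} (h_le : (rep w s 0 : ℚ) ≤ quota n v w 0)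
    (h_lt : ∀ t, s t ≠ 0 → quota n v w 0 < (rep w s 0 : ℚ) + (w t : ℚ)) :
    WLQX n v w s := by
  refine Fin.forall_fin_two.mpr ⟨Or.inr h_lt, Or.inl ?_⟩
  have hrep : (rep w s 0 : ℚ) + rep w s 1 = ∑ t, (w t : ℚ) := by
    exact_mod_cast Fin.sum_univ_two (rep w s) ▸ sum_rep w s
  have hquota := sum_quota_le hn w
  rw [Fin.sum_univ_two] at hquota
  linarith

theorem stmt3_general (n k : ℕ) (v : Fin 2 → ℕ) (w : Fin k → ℕ)
    (hn : ∑ p, v p = n)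
    (hmono : ∀ i j : Fin k, i ≤ j → w j ≤ w i) :
    ∃ s : Fin k → Fin 2, WLQX n v w s ∧ ∃ c : ℕ,
      (∀ i : Fin k, s i = 0 ↔ c ≤ (i : ℕ)) ∧
      ((∑ i ∈ Finset.univ.filter (fun i : Fin k => c ≤ (i : ℕ)), w i : ℕ) : ℚ)
        ≤ quota n v w 0 ∧
      (∀ c' : ℕ, c' < c →
        quota n v w 0 <
          ((∑ i ∈ Finset.univ.filter (fun i : Fin k => c' ≤ (i : ℕ)), w i : ℕ) : ℚ)) := by
  have hex : ∃ c, (tailSum w c : ℚ) ≤ quota n v w 0 :=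
    ⟨k, by simpa [tailSum_of_le w le_rfl] using quota_nonneg n v w 0⟩
  have hc : (tailSum w (Nat.find hex) : ℚ) ≤ quota n v w 0 := Nat.find_spec hex
  have hmin : ∀ c' < Nat.find hex, quota n v w 0 < tailSum w c' :=
    fun c' h => lt_of_not_ge (Nat.find_min hex h)
  refine ⟨tailAssignment (Nat.find hex), ?_, Nat.find hex,
    fun _ => tailAssignment_eq_zero_iff, hc, hmin⟩
  rw [← rep_tailAssignment_zero] at hc
  refine wlqx_of_two hn hc fun t ht => ?_
  have ht_lt : (t : ℕ) < Nat.find hex := not_le.mp (mt tailAssignment_eq_zero_iff.mpr ht)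
  obtain ⟨c, hc_eq⟩ : ∃ c, Nat.find hex = c + 1 := Nat.exists_eq_add_one.mpr (by omega)
  have ht_le : (t : ℕ) ≤ c := by omega
  calc quota n v w 0 < tailSum w c := hmin c (by omega)
    _ ≤ ((w t + tailSum w (c + 1) : ℕ) : ℚ) := by
      exact_mod_cast tailSum_le_add_tailSum_succ hmono ht_le
    _ = rep w (tailAssignment (Nat.find hex)) 0 + w t := by
      rw [rep_tailAssignment_zero, hc_eq]; push_cast; ring

/-- For two parties a WLQ-X assignment always exists; witnessed by giving party 1
a maximal final segment of the non-increasing weight vector of total weight at most q(1). -/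
theorem stmt3 (n k : ℕ) (v : Fin 2 → ℕ) (w : Fin k → ℕ)
    (hv : ∀ p, 1 ≤ v p) (hn : ∑ p, v p = n)
    (hw : ∀ t, 1 ≤ w t) (hmono : ∀ i j : Fin k, i ≤ j → w j ≤ w i) :
    ∃ s : Fin k → Fin 2, WLQX n v w s ∧ ∃ c : ℕ,
      (∀ i : Fin k, s i = 0 ↔ c ≤ (i : ℕ)) ∧
      ((∑ i ∈ Finset.univ.filter (fun i : Fin k => c ≤ (i : ℕ)), w i : ℕ) : ℚ)
        ≤ quota n v w 0 ∧
      (∀ c' : ℕ, c' < c →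
        quota n v w 0 <
          ((∑ i ∈ Finset.univ.filter (fun i : Fin k => c' ≤ (i : ℕ)), w i : ℕ) : ℚ)) :=
  stmt3_general n k v w hn hmono
end

section
/- The weighted D'Hondt method satisfies WLQ-X-r: in any returned seat assignment s, every party p either has rep(p,s) ≥ q(p), or for every seat t assigned to some party p* ≠ p whose final representation exceeds q(p*), it holds that rep(p,s) + w_t > q(p). -/
open Finset

/-- A run of weighted D'Hondt: seat t goes to a party maximising v_p / (g_p(t) + w_t). -/
def DHondtRun {m k : ℕ} (v : Fin m → ℕ) (w : Fin k → ℕ) (s : Fin k → Fin m) : Prop :=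
  ∀ t : Fin k, ∀ p : Fin m,
    (v p : ℚ) / ((gw w s t p : ℚ) + (w t : ℚ)) ≤
      (v (s t) : ℚ) / ((gw w s t (s t) : ℚ) + (w t : ℚ))

/-!
Let `P` be a party whose representation exceeds its quota and let `u` be the last seat `P`
receives, so that `rep P = g_P(u) + w_u`. When seat `u` was assigned, `P` beat `p`:
`v_p / (g_p(u) + w_u) ≤ v_P / rep P < n / ω`, the last step being `q(P) < rep P`. Hence
`q(p) < g_p(u) + w_u ≤ rep p + w_t`, since `g_p(u) ≤ rep p` and `w_u ≤ w_t` for `t ≤ u`.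
-/

section Arithmetic

variable {K : Type*} [Field K] [LinearOrder K] [IsStrictOrderedRing K]

lemma mul_lt_of_div_le_div_of_mul_lt {c x y A B : K} (hc : 0 ≤ c) (hA : 0 < A) (hB : 0 < B)
    (hxy : x / A ≤ y / B) (hy : c * y < B) : c * x < A :=
  calc c * x = c * A * (x / A) := by field_simp
    _ ≤ c * A * (y / B) := by gcongr
    _ = A * (c * y / B) := by ring
    _ < A * 1 := by gcongr; exact (div_lt_one hB).mpr hy
    _ = A := mul_one A

end Arithmetic

section Seats

variable {m k : ℕ}

lemma exists_last_seat (s : Fin k → Fin m) (t : Fin k) :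
    ∃ u, t ≤ u ∧ s u = s t ∧ ∀ t', s t' = s t → t' ≤ u := by
  obtain ⟨u, hu, hmax⟩ :=
    (univ.filter (s · = s t)).exists_max_image id ⟨t, mem_filter.mpr ⟨mem_univ t, rfl⟩⟩
  have hlast : ∀ t', s t' = s t → t' ≤ u := fun t' ht' => hmax t' (by simpa using ht')
  exact ⟨u, hlast t rfl, (mem_filter.mp hu).2, hlast⟩

variable (w : Fin k → ℕ) {s : Fin k → Fin m}

lemma rep_eq_gw_add_of_forall_le {u : Fin k} {P : Fin m} (hu : s u = P)
    (hlast : ∀ t', s t' = P → t' ≤ u) : rep w s P = gw w s u P + w u := by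
  rw [rep, gw, ← sum_filter_add_sum_filter_not univ (· < u)]
  congr 1
  rw [sum_eq_single_of_mem u (by simp), if_pos hu]
  intro t' ht' hne
  rw [if_neg]
  exact fun hP => (mem_filter.mp ht').2 (lt_of_le_of_ne (hlast t' hP) hne)

lemma gw_le_rep (u : Fin k) (p : Fin m) : gw w s u p ≤ rep w s p :=
  sum_le_sum_of_subset (filter_subset _ _)

end Seats

lemma quota_eq_mul {m k : ℕ} (n : ℕ) (v : Fin m → ℕ) (w : Fin k → ℕ) (p : Fin m) :
    quota n v w p = (∑ t, (w t : ℚ)) / n * v p :=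
  mul_div_right_comm _ _ _

theorem stmt5_general (n k m : ℕ) (v : Fin m → ℕ) (w : Fin k → ℕ)
    (hw : ∀ t, 1 ≤ w t) (hmono : ∀ i j : Fin k, i ≤ j → w j ≤ w i)
    (s : Fin k → Fin m) (hs : DHondtRun v w s) :
    ∀ p : Fin m, quota n v w p ≤ (rep w s p : ℚ) ∨
      ∀ t : Fin k, (s t ≠ p ∧ quota n v w (s t) < (rep w s (s t) : ℚ)) →
        quota n v w p < (rep w s p : ℚ) + (w t : ℚ) := by
  intro p
  right
  rintro t ⟨-, hq⟩
  obtain ⟨u, htu, hsu, hlast⟩ := exists_last_seat s t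
  have hrep : (rep w s (s t) : ℚ) = gw w s u (s t) + w u := by
    exact_mod_cast rep_eq_gw_add_of_forall_le w hsu hlast
  have hwin := hs u p
  rw [hsu, ← hrep] at hwin
  have hwu : (0 : ℚ) < w u := by exact_mod_cast hw u
  rw [quota_eq_mul] at hq ⊢
  calc (∑ t, (w t : ℚ)) / n * v p < gw w s u p + w u :=
        mul_lt_of_div_le_div_of_mul_lt (by positivity) (by positivity)
          (hq.trans_le' (by positivity)) hwin hq
    _ ≤ rep w s p + w t := by
        gcongr
        · exact_mod_cast gw_le_rep w u p
        · exact_mod_cast hmono t u htu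

/-- The weighted D'Hondt method satisfies WLQ-X-r. -/
theorem stmt5 (n k m : ℕ) (v : Fin m → ℕ) (w : Fin k → ℕ)
    (hv : ∀ p, 1 ≤ v p) (hn : ∑ p, v p = n)
    (hw : ∀ t, 1 ≤ w t) (hmono : ∀ i j : Fin k, i ≤ j → w j ≤ w i)
    (s : Fin k → Fin m) (hs : DHondtRun v w s) :
    ∀ p : Fin m, quota n v w p ≤ (rep w s p : ℚ) ∨
      ∀ t : Fin k, (s t ≠ p ∧ quota n v w (s t) < (rep w s (s t) : ℚ)) →
        quota n v w p < (rep w s p : ℚ) + (w t : ℚ) :=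
  stmt5_general n k m v w hw hmono s hs
end

section
/- The obtainable weighted-seat upper quota WUQ° implies WUQ-X: if a seat assignment s satisfies rep(p,s) ≤ u°(p) for every party p, where u°(p) = min{ r ∈ R(w)_{[k]} : r ≥ q(p) }, then for every party p, either rep(p,s) ≤ q(p), or for every seat t assigned to p, rep(p,s) − w_t < q(p). -/
open Finset

/-!
Removing a single seat `t` from the seats of `p` leaves a subset of seats of total weight
`rep(p,s) - w t`. If this were still at least `q(p)`, WUQ° would bound `rep(p,s)` by it,
forcing `w t ≤ 0`. Hence the second alternative of WUQ-X always holds.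
-/

section

variable {m k : ℕ} (w : Fin k → ℕ) (s : Fin k → Fin m)

theorem rep_eq_sum_filter (p : Fin m) : rep w s p = ∑ t ∈ univ.filter (s · = p), w t := by
  rw [rep, sum_filter]

theorem rep_sub_weight_eq_sum_erase {p : Fin m} {t : Fin k} (hst : s t = p) :
    (rep w s p : ℚ) - w t = ((∑ t' ∈ (univ.filter (s · = p)).erase t, w t' : ℕ) : ℚ) := by
  push_cast
  rw [sum_erase_eq_sub (by simpa using hst), rep_eq_sum_filter]
  push_cast
  rfl

end

/-- The hypothesis rep(p,s) ≤ u°(p) is expressed as: the representation of p is at most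
every subset-sum of seat weights that is at least q(p). -/
theorem stmt17_general (n k m : ℕ) (v : Fin m → ℕ) (w : Fin k → ℕ)
    (hw : ∀ t, 1 ≤ w t)
    (s : Fin k → Fin m)
    (hWUQo : ∀ p : Fin m, ∀ T : Finset (Fin k),
      quota n v w p ≤ ((∑ t ∈ T, w t : ℕ) : ℚ) → rep w s p ≤ ∑ t ∈ T, w t) :
    ∀ p : Fin m, (rep w s p : ℚ) ≤ quota n v w p ∨
      ∀ t : Fin k, s t = p → (rep w s p : ℚ) - (w t : ℚ) < quota n v w p := by
  refine fun p => Or.inr fun t hst => lt_of_not_ge fun hge => ?_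
  rw [rep_sub_weight_eq_sum_erase w s hst] at hge
  have hle : (rep w s p : ℚ) ≤ rep w s p - w t := by
    rw [rep_sub_weight_eq_sum_erase w s hst]
    exact_mod_cast hWUQo p _ hge
  have hwt : (1 : ℚ) ≤ w t := by exact_mod_cast hw t
  linarith

/-- WUQ° implies WUQ-X. Here the hypothesis rep(p,s) ≤ u°(p) is expressed as:
the representation of p is at most every subset-sum of seat weights that is at
least q(p). -/
theorem stmt17 (n k m : ℕ) (v : Fin m → ℕ) (w : Fin k → ℕ)
    (hv : ∀ p, 1 ≤ v p) (hn : ∑ p, v p = n) (hw : ∀ t, 1 ≤ w t)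
    (s : Fin k → Fin m)
    (hWUQo : ∀ p : Fin m, ∀ T : Finset (Fin k),
      quota n v w p ≤ ((∑ t ∈ T, w t : ℕ) : ℚ) → rep w s p ≤ ∑ t ∈ T, w t) :
    ∀ p : Fin m, (rep w s p : ℚ) ≤ quota n v w p ∨
      ∀ t : Fin k, s t = p → (rep w s p : ℚ) - (w t : ℚ) < quota n v w p :=
  stmt17_general n k m v w hw s hWUQo
end
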